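/- arXiv:1707.07136 — 4 statements merged into one kernel-verified Lean document; each statement's English description precedes it below -/
import Mathlib

section
/- Let μ = (μ_1,…,μ_n) and λ = (λ_1,…,λ_n) be partitions (weakly decreasing tuples of nonnegative integers) with μ_i ≤ λ_i for all i. Set ν_i = λ_i − μ_i, h̊_{ij}(μ) = (μ_i − i) − (μ_j − j). Then the product ∏_{i<j} (h̊_{ij}(μ) − ν_j)^{↑(ν_i+1)} / (h̊_{ij}(μ))^{↑(ν_i+1)} (taken over 1 ≤ i < j ≤ n, with each denominator factor a positive integer) equals zero if and only if there exist indices i < j with (μ_i − i) − (λ_j − j) ≤ 0. -/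
/-!
The `(i, j)` factor of the product is a ratio of two rising factorials of length `ν_i + 1`.
Its denominator starts at `h̊_{ij}(μ) > 0`, so it never vanishes, and its numerator starts at
`D_{ij} := h̊_{ij}(μ) − ν_j = (μ_i − i) − (λ_j − j)`, so it vanishes iff `−(ν_i + 1) < D_{ij} ≤ 0`.
Since `λ_j ≤ λ_i` and `i < j`, always `D_{ij} ≥ 1 − ν_i`, so the factor vanishes iff `D_{ij} ≤ 0`.
-/

open Finset

theorem prod_range_intCast_add_eq_zero_iff {R : Type*} [CommRing R] [IsDomain R] [CharZero R]
    (x : ℤ) (m : ℕ) : ∏ k ∈ range m, ((x : R) + k) = 0 ↔ -(m : ℤ) < x ∧ x ≤ 0 := by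
  simp only [prod_eq_zero_iff, mem_range]
  have hcast (k : ℕ) : (x : R) + k = ((x + k : ℤ) : R) := by push_cast; rfl
  simp only [hcast, Int.cast_eq_zero]
  constructor
  · rintro ⟨k, hk, hzero⟩
    omega
  · rintro ⟨hlower, hupper⟩
    exact ⟨(-x).toNat, by omega, by omega⟩

theorem prod_range_intCast_add_div_eq_zero_iff {K : Type*} [Field K] [CharZero K]
    {a h : ℤ} (hpos : 0 < h) (m : ℕ) :
    (∏ k ∈ range m, ((a : K) + k)) / ∏ k ∈ range m, ((h : K) + k) = 0 ↔
      -(m : ℤ) < a ∧ a ≤ 0 := by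
  have hden : ∏ k ∈ range m, ((h : K) + k) ≠ 0 := by
    rw [Ne, prod_range_intCast_add_eq_zero_iff]
    omega
  rw [div_eq_zero_iff, or_iff_left hden, prod_range_intCast_add_eq_zero_iff]

theorem norm_product_eq_zero_iff_general (n : ℕ) (μ lam : Fin n → ℕ)
    (hμ : ∀ i j : Fin n, i ≤ j → μ j ≤ μ i)
    (hlam : ∀ i j : Fin n, i ≤ j → lam j ≤ lam i)
    (ν : Fin n → ℕ) (hν : ∀ i, (ν i : ℤ) = (lam i : ℤ) - (μ i : ℤ))
    (hh : Fin n → Fin n → ℤ)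
    (hhdef : ∀ i j, hh i j = ((μ i : ℤ) - ((i : ℕ) + 1)) - ((μ j : ℤ) - ((j : ℕ) + 1))) :
    (∏ p ∈ Finset.univ.filter (fun p : Fin n × Fin n => p.1 < p.2),
        (∏ k ∈ Finset.range (ν p.1 + 1), ((hh p.1 p.2 : ℚ) - (ν p.2 : ℚ) + (k : ℚ))) /
        (∏ k ∈ Finset.range (ν p.1 + 1), ((hh p.1 p.2 : ℚ) + (k : ℚ)))) = 0 ↔
    ∃ i j : Fin n, i < j ∧
      ((μ i : ℤ) - ((i : ℕ) + 1)) - ((lam j : ℤ) - ((j : ℕ) + 1)) ≤ 0 := by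
  have factor_eq_zero_iff : ∀ i j : Fin n, i < j →
      ((∏ k ∈ range (ν i + 1), ((hh i j : ℚ) - (ν j : ℚ) + (k : ℚ))) /
        ∏ k ∈ range (ν i + 1), ((hh i j : ℚ) + (k : ℚ)) = 0 ↔
      ((μ i : ℤ) - ((i : ℕ) + 1)) - ((lam j : ℤ) - ((j : ℕ) + 1)) ≤ 0) := by
    intro i j hij
    have hij' : (i : ℕ) < j := hij
    have hhpos : 0 < hh i j := by
      have := hμ i j hij.le
      rw [hhdef]
      omega
    have hnum : (hh i j : ℚ) - (ν j : ℚ) = ((hh i j - ν j : ℤ) : ℚ) := by push_cast; rfl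
    rw [hnum, prod_range_intCast_add_div_eq_zero_iff hhpos, hhdef]
    have := hlam i j hij.le
    have := hν i
    have := hν j
    omega
  simp only [prod_eq_zero_iff, mem_filter, mem_univ, true_and, Prod.exists]
  exact exists₂_congr fun i j => and_congr_right (factor_eq_zero_iff i j)

/-- for partitions `μ ⊆ λ` of length `n`, with `ν = λ − μ` and
`h̊_{ij}(μ) = (μ_i − i) − (μ_j − j)`, the product
`∏_{i<j} (h̊_{ij}(μ) − ν_j)^{↑(ν_i+1)} / (h̊_{ij}(μ))^{↑(ν_i+1)}` vanishes iff
there are `i < j` with `(μ_i − i) − (λ_j − j) ≤ 0`. -/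
theorem norm_product_eq_zero_iff (n : ℕ) (μ lam : Fin n → ℕ)
    (hμ : ∀ i j : Fin n, i ≤ j → μ j ≤ μ i)
    (hlam : ∀ i j : Fin n, i ≤ j → lam j ≤ lam i)
    (hsub : ∀ i, μ i ≤ lam i)
    (ν : Fin n → ℕ) (hν : ∀ i, (ν i : ℤ) = (lam i : ℤ) - (μ i : ℤ))
    (hh : Fin n → Fin n → ℤ)
    (hhdef : ∀ i j, hh i j = ((μ i : ℤ) - ((i : ℕ) + 1)) - ((μ j : ℤ) - ((j : ℕ) + 1))) :
    (∏ p ∈ Finset.univ.filter (fun p : Fin n × Fin n => p.1 < p.2),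
        (∏ k ∈ Finset.range (ν p.1 + 1), ((hh p.1 p.2 : ℚ) - (ν p.2 : ℚ) + (k : ℚ))) /
        (∏ k ∈ Finset.range (ν p.1 + 1), ((hh p.1 p.2 : ℚ) + (k : ℚ)))) = 0 ↔
    ∃ i j : Fin n, i < j ∧
      ((μ i : ℤ) - ((i : ℕ) + 1)) - ((lam j : ℤ) - ((j : ℕ) + 1)) ≤ 0 :=
  norm_product_eq_zero_iff_general n μ lam hμ hlam ν hν hh hhdef
end

section
/- In the sl_2 ℏ-deformed Weyl algebra with generators x^1, x^2 over the field ℚ(h̊) (h̊ a transcendental parameter) subject to the relation x^1 ⋄ x^2 = ((h̊+1)/h̊) x^2 ⋄ x^1, one has for all natural numbers a, b: (x^1)^{⋄a} ⋄ (x^2)^{⋄b} = (x^2)^{⋄b} ⋄ (x^1)^{⋄a} · (h̊+1)^{↑a}/(h̊−b+1)^{↑a}, where the element h̊ satisfies the commutation rules h̊ x^1 = x^1 (h̊+1) and h̊ x^2 = x^2 (h̊−1). -/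
/-!
Pushing an element `ι f` of the base field past `x¹` (resp. `x²`) shifts its argument
by `+1` (resp. `-1`). Moving `x¹` past `(x²)^b` one factor at a time therefore produces
the factor `∏_{j<b} τ^j((h̊+1)/h̊)`, which telescopes to `(h̊+1)/(h̊-b+1)`; moving `(x¹)^a`
past `(x²)^b` then collects the shifts `∏_{i<a} σ^i((h̊+1)/(h̊-b+1))`, the quotient of
Pochhammer symbols.
-/

open Finset RatFunc

lemma RatFunc.X_add_C_ne_zero {K : Type*} [Field K] (c : K) : (X : RatFunc K) + C c ≠ 0 := by
  rw [← algebraMap_X, ← algebraMap_C, ← map_add]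
  exact algebraMap_ne_zero (Polynomial.X_add_C_ne_zero c)

section Shift

variable {R : Type*} {r : R}

lemma pow_apply_of_apply_eq_add_one [Semiring R] {σ : R →+* R} (hσ : σ r = r + 1) (n : ℕ) :
    (σ ^ n) r = r + n := by
  induction n with
  | zero => simp
  | succ n ih =>
    rw [pow_succ', RingHom.mul_def, RingHom.comp_apply, ih, map_add, map_natCast, hσ]
    push_cast; abel

lemma pow_apply_of_apply_eq_sub_one [Ring R] {σ : R →+* R} (hσ : σ r = r - 1) (n : ℕ) :
    (σ ^ n) r = r - n := by
  induction n with
  | zero => simp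
  | succ n ih =>
    rw [pow_succ', RingHom.mul_def, RingHom.comp_apply, ih, map_sub, map_natCast, hσ]
    push_cast; abel

end Shift

section TwistedCommutation

variable {R A : Type*} [CommSemiring R] [Semiring A] (ι : R →+* A) {σ τ : R →+* R} {x y : A}

lemma map_mul_pow_of_map_mul (h : ∀ f, ι f * x = x * ι (σ f)) (n : ℕ) (f : R) :
    ι f * x ^ n = x ^ n * ι ((σ ^ n) f) := by
  induction n generalizing f with
  | zero => simp
  | succ n ih =>
    rw [pow_succ', ← mul_assoc, h, mul_assoc, ih, ← mul_assoc, pow_succ, RingHom.mul_def,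
      RingHom.comp_apply]

lemma mul_pow_of_mul_eq_map_mul (h1 : ∀ f, ι f * x = x * ι (σ f))
    (h2 : ∀ f, ι f * y = y * ι (τ f)) (hστ : ∀ f, σ (τ f) = f) {g : R}
    (hxy : x * y = ι g * (y * x)) (n : ℕ) :
    x * y ^ n = y ^ n * x * ι (∏ j ∈ range n, (τ ^ j) g) := by
  induction n with
  | zero => simp
  | succ n ih =>
    calc x * y ^ (n + 1) = ι g * y ^ (n + 1) * x * ι (∏ j ∈ range n, (τ ^ j) g) := by
          rw [pow_succ', ← mul_assoc, hxy, mul_assoc, mul_assoc y, ih]; simp only [mul_assoc]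
      _ = y ^ (n + 1) * (ι ((τ ^ (n + 1)) g) * x) * ι (∏ j ∈ range n, (τ ^ j) g) := by
          rw [map_mul_pow_of_map_mul ι h2]; simp only [mul_assoc]
      _ = y ^ (n + 1) * x * (ι (σ ((τ ^ (n + 1)) g)) * ι (∏ j ∈ range n, (τ ^ j) g)) := by
          rw [h1]; simp only [mul_assoc]
      _ = y ^ (n + 1) * x * ι (∏ j ∈ range (n + 1), (τ ^ j) g) := by
          rw [pow_succ' τ, RingHom.mul_def, RingHom.comp_apply, hστ, prod_range_succ,
            mul_comm _ ((τ ^ n) g), map_mul]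

lemma pow_mul_of_mul_eq_mul_map (h : ∀ f, ι f * x = x * ι (σ f)) {c : R}
    (hxy : x * y = y * x * ι c) (n : ℕ) :
    x ^ n * y = y * x ^ n * ι (∏ i ∈ range n, (σ ^ i) c) := by
  induction n with
  | zero => simp
  | succ n ih =>
    rw [pow_succ', mul_assoc, ih, ← mul_assoc, ← mul_assoc, hxy, mul_assoc _ (ι c),
      map_mul_pow_of_map_mul ι h, prod_range_succ, mul_comm _ ((σ ^ n) c), map_mul]
    simp only [mul_assoc]

end TwistedCommutation

lemma RatFunc.prod_range_pow_apply_X_add_one_div_X {K : Type*} [Field K]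
    {τ : RatFunc K →+* RatFunc K} (hτ : τ X = X - 1) (n : ℕ) :
    ∏ j ∈ range n, (τ ^ j) ((X + 1) / X) = (X + 1) / (X - (n : RatFunc K) + 1) := by
  induction n with
  | zero => simpa using (div_self (by simpa using X_add_C_ne_zero (1 : K))).symm
  | succ n ih =>
    have hn' : (X : RatFunc K) - n + 1 ≠ 0 := by
      convert X_add_C_ne_zero (1 - n : K) using 1; simp; ring
    rw [prod_range_succ, ih, map_div₀, map_add, map_one, pow_apply_of_apply_eq_sub_one hτ,
      div_mul_div_cancel₀ hn']
    push_cast; ring_nf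

theorem hWeyl_comrelx_general (A : Type*) [Ring A] (ι : RatFunc ℚ →+* A)
    (σ τ : RatFunc ℚ →+* RatFunc ℚ)
    (hσ : σ RatFunc.X = RatFunc.X + 1)
    (hτ : τ RatFunc.X = RatFunc.X - 1)
    (hστ : ∀ f, σ (τ f) = f)
    (x1 x2 : A)
    (h1 : ∀ f, ι f * x1 = x1 * ι (σ f))
    (h2 : ∀ f, ι f * x2 = x2 * ι (τ f))
    (hrel : x1 * x2 = ι ((RatFunc.X + 1) / RatFunc.X) * (x2 * x1)) :
    ∀ a b : ℕ,
      x1 ^ a * x2 ^ b = x2 ^ b * x1 ^ a *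
        ι ((∏ k ∈ Finset.range a, (RatFunc.X + 1 + (k : RatFunc ℚ))) /
           (∏ k ∈ Finset.range a, (RatFunc.X - (b : RatFunc ℚ) + 1 + (k : RatFunc ℚ)))) := by
  intro a b
  have hx1x2b := mul_pow_of_mul_eq_map_mul ι h1 h2 hστ hrel b
  rw [prod_range_pow_apply_X_add_one_div_X hτ] at hx1x2b
  rw [pow_mul_of_mul_eq_mul_map ι h1 hx1x2b, ← prod_div_distrib]
  congr 2
  refine prod_congr rfl fun k _ => ?_
  rw [map_div₀, map_add, map_one, map_add, map_sub, map_one, map_natCast,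
    pow_apply_of_apply_eq_add_one hσ]
  ring

/-- in the `sl_2` ℏ-deformed Weyl algebra over `ℚ(h̊)` with the
relation `x¹ ⋄ x² = ((h̊+1)/h̊) x² ⋄ x¹` and commutation rules
`h̊ x¹ = x¹(h̊+1)`, `h̊ x² = x²(h̊−1)` (i.e. `f(h̊) xⁱ = xⁱ f(h̊ ± 1)` via the
shift automorphisms `σ, τ`), one has for all `a b : ℕ`:
`(x¹)^{⋄a} ⋄ (x²)^{⋄b} = (x²)^{⋄b} ⋄ (x¹)^{⋄a} · (h̊+1)^{↑a}/(h̊−b+1)^{↑a}`. -/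
theorem hWeyl_comrelx (A : Type*) [Ring A] (ι : RatFunc ℚ →+* A)
    (σ τ : RatFunc ℚ →+* RatFunc ℚ)
    (hσ : σ RatFunc.X = RatFunc.X + 1)
    (hτ : τ RatFunc.X = RatFunc.X - 1)
    (hστ : ∀ f, σ (τ f) = f) (hτσ : ∀ f, τ (σ f) = f)
    (x1 x2 : A)
    (h1 : ∀ f, ι f * x1 = x1 * ι (σ f))
    (h2 : ∀ f, ι f * x2 = x2 * ι (τ f))
    (hrel : x1 * x2 = ι ((RatFunc.X + 1) / RatFunc.X) * (x2 * x1)) :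
    ∀ a b : ℕ,
      x1 ^ a * x2 ^ b = x2 ^ b * x1 ^ a *
        ι ((∏ k ∈ Finset.range a, (RatFunc.X + 1 + (k : RatFunc ℚ))) /
           (∏ k ∈ Finset.range a, (RatFunc.X - (b : RatFunc ℚ) + 1 + (k : RatFunc ℚ)))) :=
  hWeyl_comrelx_general A ι σ τ hσ hτ hστ x1 x2 h1 h2 hrel
end

section
/- With the same ℏ-deformed sl_2 Weyl algebra conventions (x^1 x^2 = ((h̊+1)/h̊) x^2 x^1, and x^i f(h̊) = f(h̊+w_i) x^i with w_1 = 1, w_2 = −1), define the algebra map q̌ on generators by q̌(x^1) = x^2 · h̊/(h̊−1), q̌(x^2) = x^1, q̌(f(h̊)) = f(−h̊) for rational functions f. Then for all natural numbers a, b: q̌((x^2)^{⋄a} ⋄ (x^1)^{⋄b}) = (x^2)^{⋄b} ⋄ (x^1)^{⋄a} · h̊^{↑(a+1)}/(h̊−b)^{↑(a+1)}. -/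
/-!
Write every coefficient as a ratio `(X + p) / (X + q)` with `p q : ℚ`. Moving such a ratio to
the right past `x¹` (resp. `x²`) shifts `p` and `q` by `+1` (resp. `-1`), and products of
such ratios telescope. With all coefficients pushed to the right, the defining relation reads
`x¹ x² = x² x¹ · (X + 1) / X`, hence `x¹ (x²)ⁿ = (x²)ⁿ x¹ · (X + 1) / (X + 1 - n)` and
`q̌(x¹)ⁿ = (x²)ⁿ · X / (X - n)`. Peeling `q̌(x²) = x¹` off the left, each step of the induction
on `a` contributes the factor `(X + a) / (X + a - b)`.
-/

namespace RatFunc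

theorem X_add_ratCast_ne_zero (c : ℚ) : X + (c : RatFunc ℚ) ≠ 0 := by
  simpa [algebraMap_X, algebraMap_C] using
    algebraMap_ne_zero (K := ℚ) (Polynomial.X_add_C_ne_zero c)

noncomputable def linFrac (p q : ℚ) : RatFunc ℚ := (X + (p : RatFunc ℚ)) / (X + (q : RatFunc ℚ))

theorem linFrac_self (p : ℚ) : linFrac p p = 1 :=
  div_self (X_add_ratCast_ne_zero p)

theorem linFrac_mul_linFrac (p q r : ℚ) : linFrac p q * linFrac q r = linFrac p r :=
  div_mul_div_cancel₀ (X_add_ratCast_ne_zero q)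

theorem map_linFrac {φ : RatFunc ℚ →+* RatFunc ℚ} {c : ℚ} (hφ : φ X = X + (c : RatFunc ℚ))
    (p q : ℚ) : φ (linFrac p q) = linFrac (p + c) (q + c) := by
  simp only [linFrac, map_div₀, map_add, map_ratCast, hφ, Rat.cast_add, add_assoc,
    add_comm (c : RatFunc ℚ)]

theorem pow_apply_linFrac {φ : RatFunc ℚ →+* RatFunc ℚ} {c : ℚ}
    (hφ : φ X = X + (c : RatFunc ℚ)) (n : ℕ) (p q : ℚ) :
    (φ ^ n) (linFrac p q) = linFrac (p + n * c) (q + n * c) := by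
  induction n generalizing p q with
  | zero => simp
  | succ n ih =>
    rw [pow_succ, RingHom.coe_mul, Function.comp_apply, map_linFrac hφ, ih]
    congr 1 <;> push_cast <;> ring

theorem prod_range_linFrac (n b : ℕ) :
    ∏ k ∈ Finset.range n, linFrac k (k - b) =
      (∏ k ∈ Finset.range n, (X + (k : RatFunc ℚ))) /
        ∏ k ∈ Finset.range n, (X - (b : RatFunc ℚ) + (k : RatFunc ℚ)) := by
  rw [← Finset.prod_div_distrib]
  refine Finset.prod_congr rfl fun k _ => ?_
  rw [linFrac]
  push_cast
  ring

end RatFunc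

theorem map_mul_pow_eq_pow_mul_map_pow {R A : Type*} [Semiring R] [Semiring A] {ι : R →+* A}
    {φ : R →+* R} {x : A} (h : ∀ f, ι f * x = x * ι (φ f)) (n : ℕ) (f : R) :
    ι f * x ^ n = x ^ n * ι ((φ ^ n) f) := by
  induction n generalizing f with
  | zero => simp
  | succ n ih =>
    rw [pow_succ', ← mul_assoc, h, mul_assoc, ih, ← mul_assoc, ← pow_succ', pow_succ φ,
      RingHom.coe_mul, Function.comp_apply]

open RatFunc

namespace HWeyl

variable {A : Type*} [Ring A] {ι : RatFunc ℚ →+* A} {σ τ : RatFunc ℚ →+* RatFunc ℚ} {x1 x2 : A}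

theorem mul_linFrac_pow (hτ : τ X = X + ((-1 : ℚ) : RatFunc ℚ))
    (h2 : ∀ f, ι f * x2 = x2 * ι (τ f)) (n : ℕ) :
    (x2 * ι (linFrac 0 (-1))) ^ n = x2 ^ n * ι (linFrac 0 (-n)) := by
  induction n with
  | zero => simp [linFrac_self]
  | succ n ih =>
    rw [pow_succ, ih, mul_assoc, ← mul_assoc (ι _), h2, map_linFrac hτ, mul_assoc, ← map_mul,
      zero_add, mul_comm (linFrac _ _), linFrac_mul_linFrac, ← mul_assoc, ← pow_succ]
    congr 3
    push_cast
    ring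

theorem mul_eq_mul_mul_linFrac (hσ : σ X = X + ((1 : ℚ) : RatFunc ℚ))
    (hτ : τ X = X + ((-1 : ℚ) : RatFunc ℚ))
    (h1 : ∀ f, ι f * x1 = x1 * ι (σ f)) (h2 : ∀ f, ι f * x2 = x2 * ι (τ f))
    (hrel : x1 * x2 = ι (linFrac 1 0) * (x2 * x1)) :
    x1 * x2 = x2 * x1 * ι (linFrac 1 0) := by
  rw [hrel, ← mul_assoc, h2, map_linFrac hτ, mul_assoc, h1, map_linFrac hσ, ← mul_assoc]
  norm_num

theorem mul_pow_eq_pow_mul_mul_linFrac (hτ : τ X = X + ((-1 : ℚ) : RatFunc ℚ))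
    (h2 : ∀ f, ι f * x2 = x2 * ι (τ f)) (hcomm : x1 * x2 = x2 * x1 * ι (linFrac 1 0)) (n : ℕ) :
    x1 * x2 ^ n = x2 ^ n * x1 * ι (linFrac 1 (1 - n)) := by
  induction n with
  | zero => simp [linFrac_self]
  | succ n ih =>
    rw [pow_succ, ← mul_assoc, ih, mul_assoc, h2, map_linFrac hτ, ← mul_assoc,
      mul_assoc (x2 ^ n), hcomm]
    simp only [mul_assoc, ← map_mul, add_neg_cancel, linFrac_mul_linFrac]
    congr 5
    push_cast
    ring

theorem map_pow_mul_pow (hσ : σ X = X + ((1 : ℚ) : RatFunc ℚ))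
    (hτ : τ X = X + ((-1 : ℚ) : RatFunc ℚ))
    (h1 : ∀ f, ι f * x1 = x1 * ι (σ f)) (h2 : ∀ f, ι f * x2 = x2 * ι (τ f))
    (hcomm : x1 * x2 = x2 * x1 * ι (linFrac 1 0)) {Q : A →+* A}
    (hQ1 : Q x1 = x2 * ι (linFrac 0 (-1))) (hQ2 : Q x2 = x1) (a b : ℕ) :
    Q (x2 ^ a * x1 ^ b) =
      x2 ^ b * x1 ^ a * ι (∏ k ∈ Finset.range (a + 1), linFrac k (k - b)) := by
  induction a with
  | zero => simp [hQ1, mul_linFrac_pow hτ h2]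
  | succ a ih =>
    set P := ∏ k ∈ Finset.range (a + 1), linFrac k (k - b)
    calc Q (x2 ^ (a + 1) * x1 ^ b) = x1 * x2 ^ b * x1 ^ a * ι P := by
          rw [pow_succ', mul_assoc, map_mul, hQ2, ih]
          simp only [mul_assoc]
      _ = x2 ^ b * x1 * (ι (linFrac 1 (1 - b)) * x1 ^ a) * ι P := by
          rw [mul_pow_eq_pow_mul_mul_linFrac hτ h2 hcomm]
          simp only [mul_assoc]
      _ = x2 ^ b * x1 ^ (a + 1) * ι (P * linFrac (a + 1 : ℕ) ((a + 1 : ℕ) - b)) := by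
          rw [map_mul_pow_eq_pow_mul_map_pow h1, pow_apply_linFrac hσ, mul_comm P, map_mul,
            pow_succ']
          simp only [mul_assoc]
          congr 6 <;> push_cast <;> ring
      _ = _ := by rw [Finset.prod_range_succ _ (a + 1)]

end HWeyl

theorem hWeyl_zhelobenko_action_general (A : Type*) [Ring A] (ι : RatFunc ℚ →+* A)
    (σ τ : RatFunc ℚ →+* RatFunc ℚ)
    (hσ : σ RatFunc.X = RatFunc.X + 1)
    (hτ : τ RatFunc.X = RatFunc.X - 1)
    (x1 x2 : A)
    (h1 : ∀ f, ι f * x1 = x1 * ι (σ f))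
    (h2 : ∀ f, ι f * x2 = x2 * ι (τ f))
    (hrel : x1 * x2 = ι ((RatFunc.X + 1) / RatFunc.X) * (x2 * x1))
    (Q : A →+* A)
    (hQ1 : Q x1 = x2 * ι (RatFunc.X / (RatFunc.X - 1)))
    (hQ2 : Q x2 = x1) :
    ∀ a b : ℕ,
      Q (x2 ^ a * x1 ^ b) = x2 ^ b * x1 ^ a *
        ι ((∏ k ∈ Finset.range (a + 1), (RatFunc.X + (k : RatFunc ℚ))) /
           (∏ k ∈ Finset.range (a + 1),
              (RatFunc.X - (b : RatFunc ℚ) + (k : RatFunc ℚ)))) := by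
  have hσ' : σ X = X + ((1 : ℚ) : RatFunc ℚ) := by rw [hσ, Rat.cast_one]
  have hτ' : τ X = X + ((-1 : ℚ) : RatFunc ℚ) := by
    rw [hτ, Rat.cast_neg, Rat.cast_one, sub_eq_add_neg]
  have hrel' : x1 * x2 = ι (linFrac 1 0) * (x2 * x1) := by simpa [linFrac] using hrel
  have hQ1' : Q x1 = x2 * ι (linFrac 0 (-1)) := by simpa [linFrac, sub_eq_add_neg] using hQ1
  intro a b
  rw [← prod_range_linFrac]
  exact HWeyl.map_pow_mul_pow hσ' hτ' h1 h2 (HWeyl.mul_eq_mul_mul_linFrac hσ' hτ' h1 h2 hrel')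
    hQ1' hQ2 a b

/-- in the `sl_2` ℏ-deformed Weyl algebra, the Zhelobenko
automorphism `q̌` (an algebra map with `q̌(x¹) = x²·h̊/(h̊−1)`, `q̌(x²) = x¹`,
`q̌(f(h̊)) = f(−h̊)`) satisfies, for all `a b : ℕ`:
`q̌((x²)^{⋄a} ⋄ (x¹)^{⋄b}) = (x²)^{⋄b} ⋄ (x¹)^{⋄a} · h̊^{↑(a+1)}/(h̊−b)^{↑(a+1)}`. -/
theorem hWeyl_zhelobenko_action (A : Type*) [Ring A] (ι : RatFunc ℚ →+* A)
    (σ τ neg : RatFunc ℚ →+* RatFunc ℚ)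
    (hσ : σ RatFunc.X = RatFunc.X + 1)
    (hτ : τ RatFunc.X = RatFunc.X - 1)
    (hneg : neg RatFunc.X = -RatFunc.X)
    (hστ : ∀ f, σ (τ f) = f) (hτσ : ∀ f, τ (σ f) = f)
    (x1 x2 : A)
    (h1 : ∀ f, ι f * x1 = x1 * ι (σ f))
    (h2 : ∀ f, ι f * x2 = x2 * ι (τ f))
    (hrel : x1 * x2 = ι ((RatFunc.X + 1) / RatFunc.X) * (x2 * x1))
    (Q : A →+* A)
    (hQι : ∀ f, Q (ι f) = ι (neg f))
    (hQ1 : Q x1 = x2 * ι (RatFunc.X / (RatFunc.X - 1)))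
    (hQ2 : Q x2 = x1) :
    ∀ a b : ℕ,
      Q (x2 ^ a * x1 ^ b) = x2 ^ b * x1 ^ a *
        ι ((∏ k ∈ Finset.range (a + 1), (RatFunc.X + (k : RatFunc ℚ))) /
           (∏ k ∈ Finset.range (a + 1),
              (RatFunc.X - (b : RatFunc ℚ) + (k : RatFunc ℚ)))) :=
  hWeyl_zhelobenko_action_general A ι σ τ hσ hτ x1 x2 h1 h2 hrel Q hQ1 hQ2
end

section
/- Let ν, ν' ∈ {0,1}^n. In the ℏ-deformed Grassmann algebra, the diagonal values of the contravariant form on ordered monomials ζ^ν = (ζ^n)^{ν_n}⋯(ζ^1)^{ν_1} are κ_ν = ∏_{i<j} ((h̊_{ij} − ν_j)/h̊_{ij})^{1−ν_i}, and this expression satisfies the covariance identity: applying the substitution q̌_i (which exchanges h̊_i ↔ h̊_{i+1} in shifted form, i.e. maps h̊_{i,i+1} ↦ −h̊_{i,i+1} and permutes the other h̊_{kl} accordingly) gives q̌_i(κ_ν) = κ_{s_iν} · ((h̊_{i,i+1}+ν_{i+1})/h̊_{i,i+1})^{1−ν_i} · (h̊_{i,i+1}/(h̊_{i,i+1}−ν_i))^{1−ν_{i+1}},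 where s_iν swaps ν_i and ν_{i+1}. -/
/-!
Write `κ_ν` as the product over increasing pairs `a < b` of the factors `f(a, b)` built from
`h̊_a, h̊_b, ν_a, ν_b`. The adjacent transposition `s_i` permutes the increasing pairs except
`(i, i+1)`, which it sends to `(i+1, i)`. Hence `q̌_i(κ_ν)` and `κ_{s_iν}` differ only in that one
factor: `f(i+1, i)` replaces `f(i, i+1)`, and these are the two correction terms.
-/

noncomputable section

/-- The field `ℚ(h̊_1, …, h̊_n)` of rational functions. -/
abbrev HField (n : ℕ) := FractionRing (MvPolynomial (Fin n) ℚ)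

/-- The generator `h̊_i` inside `ℚ(h̊_1, …, h̊_n)`. -/
def hgen (n : ℕ) (i : Fin n) : HField n :=
  algebraMap (MvPolynomial (Fin n) ℚ) (HField n) (MvPolynomial.X i)

/-- `κ_ν = ∏_{i<j} ((h̊_{ij} − ν_j)/h̊_{ij})^{1−ν_i}`, computed with a given choice
of the variables `h`. -/
def kappaNu (n : ℕ) (h : Fin n → HField n) (ν : Fin n → ℕ) : HField n :=
  ∏ p ∈ Finset.univ.filter (fun p : Fin n × Fin n => p.1 < p.2),
    ((h p.1 - h p.2 - (ν p.2 : HField n)) / (h p.1 - h p.2)) ^ (1 - ν p.1)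

lemma hgen_sub_hgen_sub_natCast_ne_zero {n : ℕ} {i j : Fin n} (hne : i ≠ j) (c : ℕ) :
    hgen n i - hgen n j - (c : HField n) ≠ 0 := by
  have hpoly : hgen n i - hgen n j - (c : HField n) =
      algebraMap (MvPolynomial (Fin n) ℚ) (HField n)
        (.X i - .X j - (c : MvPolynomial (Fin n) ℚ)) := by
    simp [hgen]
  rw [hpoly, map_ne_zero_iff _ (IsFractionRing.injective _ _)]
  intro h
  have := congrArg (MvPolynomial.eval fun k => if k = i then (c : ℚ) + 1 else 0) h
  simp [hne.symm] at this

section AdjacentSwap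

open Finset Equiv

variable {α : Type*} [LinearOrder α] {i j : α}

theorem swap_lt_swap_iff_of_covBy (hij : i ⋖ j) (a b : α) :
    swap i j a < swap i j b ↔ (a, b) = (j, i) ∨ (a < b ∧ (a, b) ≠ (i, j)) := by
  have hlt := hij.lt
  have hge := @hij.ge_of_gt
  have hle := @hij.le_of_lt
  simp only [swap_apply_def, Prod.mk.injEq, ne_eq]
  split_ifs <;> subst_vars <;> grind

variable [Fintype α]

theorem map_prodCongr_swap_filter_lt_of_covBy (hij : i ⋖ j) :
    (univ.filter fun p : α × α => p.1 < p.2).map (prodCongr (swap i j) (swap i j)).toEmbedding =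
      insert (j, i) ((univ.filter fun p : α × α => p.1 < p.2).erase (i, j)) := by
  ext ⟨a, b⟩
  simp [mem_map_equiv, swap_lt_swap_iff_of_covBy hij, and_comm]

theorem prod_filter_lt_swap_mul_of_covBy {M : Type*} [CommMonoid M] (hij : i ⋖ j)
    (f : α → α → M) :
    (∏ p ∈ univ.filter (fun p : α × α => p.1 < p.2), f (swap i j p.1) (swap i j p.2)) * f i j =
      (∏ p ∈ univ.filter (fun p : α × α => p.1 < p.2), f p.1 p.2) * f j i := by
  set S := univ.filter fun p : α × α => p.1 < p.2
  have hji : (j, i) ∉ S.erase (i, j) := by simp [S, hij.lt.le]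
  have hij_mem : (i, j) ∈ S := by simp [S, hij.lt]
  have hmap : ∏ p ∈ S, f (swap i j p.1) (swap i j p.2) =
      f j i * ∏ p ∈ S.erase (i, j), f p.1 p.2 := by
    rw [← prod_insert hji (f := fun p => f p.1 p.2), ← map_prodCongr_swap_filter_lt_of_covBy hij,
      prod_map]
    rfl
  rw [hmap, ← mul_prod_erase S (fun p => f p.1 p.2) hij_mem]
  dsimp only
  ac_rfl

end AdjacentSwap

def kappaFactor (n : ℕ) (h : Fin n → HField n) (ν : Fin n → ℕ) (a b : Fin n) : HField n :=
  ((h a - h b - (ν b : HField n)) / (h a - h b)) ^ (1 - ν a)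

lemma kappaNu_eq_prod_kappaFactor (n : ℕ) (h : Fin n → HField n) (ν : Fin n → ℕ) :
    kappaNu n h ν = ∏ p ∈ Finset.univ.filter (fun p : Fin n × Fin n => p.1 < p.2),
      kappaFactor n h ν p.1 p.2 :=
  rfl

lemma kappaNu_comp_swap (n : ℕ) (h : Fin n → HField n) (ν : Fin n → ℕ) (i j : Fin n) :
    kappaNu n (h ∘ Equiv.swap i j) ν =
      ∏ p ∈ Finset.univ.filter (fun p : Fin n × Fin n => p.1 < p.2),
        kappaFactor n h (ν ∘ Equiv.swap i j) (Equiv.swap i j p.1) (Equiv.swap i j p.2) := by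
  simp [kappaNu_eq_prod_kappaFactor, kappaFactor]

theorem kappa_covariance_general (n : ℕ) (ν : Fin n → ℕ)
    (i j : Fin n) (hij : (j : ℕ) = (i : ℕ) + 1) :
    kappaNu n (hgen n ∘ (Equiv.swap i j)) ν =
      kappaNu n (hgen n) (ν ∘ (Equiv.swap i j)) *
        ((hgen n i - hgen n j + (ν j : HField n)) / (hgen n i - hgen n j)) ^ (1 - ν i) *
        ((hgen n i - hgen n j) / (hgen n i - hgen n j - (ν i : HField n))) ^ (1 - ν j) := by
  have hcov : i ⋖ j := by simp [hij]
  have hne : i ≠ j := hcov.lt.ne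
  set σ := Equiv.swap i j
  have h_ij : kappaFactor n (hgen n) (ν ∘ σ) i j =
      ((hgen n i - hgen n j - (ν i : HField n)) / (hgen n i - hgen n j)) ^ (1 - ν j) := by
    simp [kappaFactor, σ]
  have h_ji : kappaFactor n (hgen n) (ν ∘ σ) j i =
      ((hgen n i - hgen n j + (ν j : HField n)) / (hgen n i - hgen n j)) ^ (1 - ν i) := by
    rw [kappaFactor, ← neg_div_neg_eq]
    simp only [Function.comp_apply, Equiv.swap_apply_left, Equiv.swap_apply_right, neg_sub, σ]
    ring_nf
  have h_ij_ne : kappaFactor n (hgen n) (ν ∘ σ) i j ≠ 0 := by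
    have hsub := hgen_sub_hgen_sub_natCast_ne_zero hne 0
    rw [Nat.cast_zero, sub_zero] at hsub
    rw [h_ij]
    exact pow_ne_zero _ (div_ne_zero (hgen_sub_hgen_sub_natCast_ne_zero hne _) hsub)
  have key := prod_filter_lt_swap_mul_of_covBy hcov (kappaFactor n (hgen n) (ν ∘ σ))
  rw [← kappaNu_eq_prod_kappaFactor, ← kappaNu_comp_swap, ← eq_mul_inv_iff_mul_eq₀ h_ij_ne] at key
  rw [key, h_ji, h_ij, ← inv_pow, inv_div, mul_assoc]

/-- for `ν ∈ {0,1}^n` the diagonal values `κ_ν` of the contravariant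
form on the ℏ-Grassmann algebra satisfy the covariance identity
`q̌_i(κ_ν) = κ_{s_iν} · ((h̊_{i,i+1}+ν_{i+1})/h̊_{i,i+1})^{1−ν_i} ·
(h̊_{i,i+1}/(h̊_{i,i+1}−ν_i))^{1−ν_{i+1}}`, where `q̌_i` acts by the substitution
swapping `h̊_i ↔ h̊_{i+1}` and `s_iν` swaps `ν_i, ν_{i+1}`. -/
theorem kappa_covariance (n : ℕ) (ν : Fin n → ℕ) (hν : ∀ i, ν i ≤ 1)
    (i j : Fin n) (hij : (j : ℕ) = (i : ℕ) + 1) :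
    kappaNu n (hgen n ∘ (Equiv.swap i j)) ν =
      kappaNu n (hgen n) (ν ∘ (Equiv.swap i j)) *
        ((hgen n i - hgen n j + (ν j : HField n)) / (hgen n i - hgen n j)) ^ (1 - ν i) *
        ((hgen n i - hgen n j) / (hgen n i - hgen n j - (ν i : HField n))) ^ (1 - ν j) :=
  kappa_covariance_general n ν i j hij
end
end
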